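/- arXiv:1704.08472 — 3 statements merged into one kernel-verified Lean document; each statement's English description precedes it below -/
import Mathlib

section
/- Let G be a finite simple graph on n ≥ 2 vertices with degree sequence d_1 ≥ d_2 ≥ … ≥ d_n. Then f(G) ≤ d_1 − d_2 = diff(G). -/
open Finset

variable {V : Type*}

open scoped Classical in
/-- Degree of `v` in the subgraph of `G` induced on the vertex set `A`
(number of neighbours of `v` inside `A`). -/
noncomputable def degOn (G : SimpleGraph V) (A : Finset V) (v : V) : ℕ :=
  (A.filter fun w => G.Adj v w).card

/-- Maximum degree of the subgraph of `G` induced on `A`. -/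
noncomputable def maxDegOn (G : SimpleGraph V) (A : Finset V) : ℕ :=
  A.sup (degOn G A)

open scoped Classical in
/-- The subgraph of `G` induced on `A` has fewer than `k` vertices or at least `k`
vertices realising its maximum degree. -/
def equates (G : SimpleGraph V) (k : ℕ) (A : Finset V) : Prop :=
  A.card < k ∨ k ≤ (A.filter fun v => degOn G A v = maxDegOn G A).card

open scoped Classical in
/-- `f_k` of the subgraph of `G` induced on `A`: the minimum number of vertices of `A`
whose deletion leaves an induced subgraph with fewer than `k` vertices or with at
least `k` vertices realising its maximum degree. -/
noncomputable def fkOn (G : SimpleGraph V) (k : ℕ) (A : Finset V) : ℕ :=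
  sInf {m | ∃ S, S ⊆ A ∧ S.card = m ∧ equates G k (A \ S)}

/-- `f_k(G)`. -/
noncomputable def fk [Fintype V] (G : SimpleGraph V) (k : ℕ) : ℕ :=
  fkOn G k Finset.univ

/-- `diff` of the subgraph of `G` induced on `A`: the largest degree minus the
second-largest degree (with multiplicity) of this subgraph. -/
noncomputable def diffOn (G : SimpleGraph V) (A : Finset V) : ℕ :=
  maxDegOn G A - ((A.val.map (degOn G A)).erase (maxDegOn G A)).sup

/-- `diff(G) = d₁ - d₂`, the difference between the largest and second-largest
vertex degrees of `G`. -/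
noncomputable def diffDeg [Fintype V] (G : SimpleGraph V) : ℕ :=
  diffOn G Finset.univ

/-!
Let `v` be a vertex of maximum degree `d₁` and `u` a vertex of maximum degree `d₂` among the
others. At least `d₁ - d₂` neighbours of `v` are neither `u` nor neighbours of `u`, since
`Equiv.swap u v` embeds the rest of `N(v)` into `N(u)`. Deleting `d₁ - d₂` of them lowers the
degree of `v` to `d₂`, keeps that of `u`, and does not raise any other degree, so afterwards
`u` and `v` both realise the maximum degree `d₂`.
-/

open scoped Classical

section

variable (G : SimpleGraph V)

theorem degOn_mono {A B : Finset V} (h : A ⊆ B) (v : V) : degOn G A v ≤ degOn G B v :=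
  card_le_card (filter_subset_filter _ h)

theorem degOn_sdiff (A S : Finset V) (v : V) :
    degOn G (A \ S) v = #({w ∈ A | G.Adj v w} \ S) := by
  unfold degOn
  congr 1
  ext w
  simp only [mem_filter, mem_sdiff]
  tauto

theorem card_filter_adj_inter_insert_le {A : Finset V} {v : V} (hv : v ∈ A) (u : V) :
    #({w ∈ A | G.Adj v w} ∩ insert u ({w ∈ A | G.Adj u w})) ≤ degOn G A u := by
  refine card_le_card_of_injOn (Equiv.swap u v) (fun x hx => ?_) (Equiv.injective _).injOn
  simp only [coe_inter, coe_insert, coe_filter, Set.mem_inter_iff, Set.mem_insert_iff,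
    Set.mem_ofPred_eq] at hx
  obtain ⟨⟨hxA, hvx⟩, rfl | ⟨-, hux⟩⟩ := hx
  · simpa [hv] using hvx.symm
  · have hxu : x ≠ u := fun h => G.irrefl (h ▸ hux)
    have hxv : x ≠ v := fun h => G.irrefl (h ▸ hvx)
    simpa [Equiv.swap_apply_of_ne_of_ne hxu hxv] using ⟨hxA, hux⟩

theorem sub_le_card_filter_adj_sdiff_insert {A : Finset V} {v : V} (hv : v ∈ A) (u : V) :
    degOn G A v - degOn G A u ≤ #({w ∈ A | G.Adj v w} \ insert u ({w ∈ A | G.Adj u w})) := by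
  rw [card_sdiff, inter_comm]
  have := card_filter_adj_inter_insert_le G hv u
  unfold degOn at this ⊢
  omega

theorem equates_two_of_forall_le {A : Finset V} {u v : V} (hu : u ∈ A) (hv : v ∈ A)
    (huv : u ≠ v) (hmax : ∀ w ∈ A, degOn G A w ≤ degOn G A u)
    (hvu : degOn G A v = degOn G A u) : equates G 2 A := by
  have hmaxDeg : maxDegOn G A = degOn G A u := le_antisymm (Finset.sup_le hmax) (le_sup hu)
  right
  calc 2 = #{u, v} := (card_pair huv).symm
    _ ≤ _ := card_le_card fun x hx => by
      rcases mem_insert.mp hx with rfl | hx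
      · exact mem_filter.mpr ⟨hu, hmaxDeg.symm⟩
      · rw [mem_singleton.mp hx]
        exact mem_filter.mpr ⟨hv, hvu.trans hmaxDeg.symm⟩

theorem exists_sdiff_equates_two {A : Finset V} {u v : V} (hu : u ∈ A) (hv : v ∈ A)
    (huv : u ≠ v) (huv_le : degOn G A u ≤ degOn G A v)
    (hsecond : ∀ w ∈ A, w ≠ v → degOn G A w ≤ degOn G A u) :
    ∃ S ⊆ A, #S = degOn G A v - degOn G A u ∧ equates G 2 (A \ S) := by
  obtain ⟨S, hST, hS⟩ := exists_subset_card_eq (sub_le_card_filter_adj_sdiff_insert G hv u)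
  have hSv : S ⊆ {w ∈ A | G.Adj v w} := hST.trans sdiff_subset
  obtain ⟨huS, hSu⟩ := disjoint_insert_left.mp (disjoint_of_subset_left hST sdiff_disjoint).symm
  have hvS : v ∉ S := fun h => G.irrefl (mem_filter.mp (hSv h)).2
  have hdeg_v : degOn G (A \ S) v = degOn G A u := by
    rw [degOn_sdiff, card_sdiff_of_subset hSv, hS]
    exact Nat.sub_sub_self huv_le
  have hdeg_u : degOn G (A \ S) u = degOn G A u := by
    rw [degOn_sdiff, sdiff_eq_self_of_disjoint hSu]
    rfl
  refine ⟨S, hST.trans (sdiff_subset.trans (filter_subset _ _)), hS, ?_⟩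
  refine equates_two_of_forall_le G (mem_sdiff.mpr ⟨hu, huS⟩) (mem_sdiff.mpr ⟨hv, hvS⟩) huv
    (fun w hw => ?_) (hdeg_v.trans hdeg_u.symm)
  rw [hdeg_u]
  by_cases hwv : w = v
  · exact (hwv ▸ hdeg_v).le
  · exact (degOn_mono G sdiff_subset w).trans (hsecond w (mem_sdiff.mp hw).1 hwv)

theorem diffOn_eq_of_maxDegOn_eq {A : Finset V} {v : V} (hv : v ∈ A)
    (hmax : maxDegOn G A = degOn G A v) :
    diffOn G A = degOn G A v - (A.erase v).sup (degOn G A) := by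
  have hA : A.val.map (degOn G A) = degOn G A v ::ₘ (A.erase v).val.map (degOn G A) := by
    rw [erase_val, ← Multiset.map_cons, Multiset.cons_erase (mem_val.mpr hv)]
  rw [diffOn, hA, hmax, Multiset.erase_cons_head, sup_def]

theorem fkOn_le_card {k : ℕ} {A S : Finset V} (hS : S ⊆ A) (h : equates G k (A \ S)) :
    fkOn G k A ≤ #S :=
  Nat.sInf_le ⟨S, hS, rfl, h⟩

theorem fkOn_two_le_diffOn {A : Finset V} (hA : 2 ≤ #A) : fkOn G 2 A ≤ diffOn G A := by
  obtain ⟨v, hv, hvmax⟩ := exists_mem_eq_sup A (card_pos.mp (by omega)) (degOn G A)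
  have hA' : (A.erase v).Nonempty := card_pos.mp (by rw [card_erase_of_mem hv]; omega)
  obtain ⟨u, hu, husecond⟩ := exists_mem_eq_sup (A.erase v) hA' (degOn G A)
  have huv : u ≠ v := ne_of_mem_erase hu
  obtain ⟨S, hSA, hS, heq⟩ := exists_sdiff_equates_two G (mem_of_mem_erase hu) hv huv
    (hvmax ▸ le_sup (mem_of_mem_erase hu))
    (fun w hw hwv => husecond ▸ le_sup (mem_erase.mpr ⟨hwv, hw⟩))
  rw [diffOn_eq_of_maxDegOn_eq G hv hvmax, husecond, ← hS]
  exact fkOn_le_card G hSA heq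

end

/-- For a graph `G` on `n ≥ 2` vertices, `f(G) ≤ diff(G) = d₁ - d₂`. -/
theorem stmt0 {V : Type*} [Fintype V] (G : SimpleGraph V)
    (hn : 2 ≤ Fintype.card V) :
    fk G 2 ≤ diffDeg G :=
  fkOn_two_le_diffOn G (by rwa [card_univ])
end

section
/- Let G be a finite simple graph on n ≥ 2 vertices and suppose f(G) ≠ diff(G). Then G has a unique vertex v of maximum degree, and f(G) = 1 + f(G − v), where G − v is the induced subgraph on V(G)∖{v}. -/
open Finset

variable {V : Type*}

/-!
Let `v` be a vertex of maximum degree and `u` one of maximum degree among the others.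
Deleting `d(v) - d(u)` neighbours of `v` outside the closed neighbourhood of `u` ties `u` and
`v`, so `f(G) ≤ diff(G)`; with two vertices of maximum degree both sides vanish. If an optimal
deletion set `S` missed `v`, then, since `H = G - S` has a vertex `u ≠ v` of maximum degree,
`d(v) - |S| ≤ d_H(v) ≤ d_H(u) ≤ d(u)`, i.e. `diff(G) ≤ f(G)`. So when `f(G) ≠ diff(G)` every
optimal set contains `v`, and removing `v` from it gives `f(G) = 1 + f(G - v)`.
-/

namespace SimpleGraph

open scoped Classical

variable (G : SimpleGraph V) {k : ℕ} {A S T : Finset V} {u v w : V}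

lemma degOn_mono (h : A ⊆ S) (v : V) : degOn G A v ≤ degOn G S v :=
  card_le_card (filter_subset_filter _ h)

lemma degOn_le_maxDegOn (hv : v ∈ A) : degOn G A v ≤ maxDegOn G A :=
  le_sup hv

lemma maxDegOn_eq_degOn (hu : u ∈ A) (hmax : ∀ w ∈ A, degOn G A w ≤ degOn G A u) :
    maxDegOn G A = degOn G A u :=
  le_antisymm (Finset.sup_le hmax) (le_sup hu)

variable [DecidableEq V]

lemma degOn_le_card_erase (v : V) : degOn G A v ≤ #(A.erase v) :=
  card_le_card fun w hw => by
    rw [mem_filter] at hw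
    exact mem_erase.2 ⟨hw.2.ne', hw.1⟩

lemma degOn_le_degOn_sdiff_add_card (v : V) : degOn G A v ≤ degOn G (A \ S) v + #S :=
  calc degOn G A v ≤ #(((A \ S).filter fun w => G.Adj v w) ∪ S) :=
        card_le_card fun w hw => by simp only [mem_filter, mem_union, mem_sdiff] at *; tauto
    _ ≤ degOn G (A \ S) v + #S := card_union_le _ _

lemma degOn_sdiff_of_subset (hT : T ⊆ A.filter fun w => G.Adj v w) :
    degOn G (A \ T) v = degOn G A v - #T := by
  have : ((A \ T).filter fun w => G.Adj v w) = (A.filter fun w => G.Adj v w) \ T := by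
    ext w; simp only [mem_filter, mem_sdiff]; tauto
  rw [degOn, this, card_sdiff_of_subset hT, degOn]

lemma degOn_sdiff_of_disjoint (hT : Disjoint T (A.filter fun w => G.Adj u w)) :
    degOn G (A \ T) u = degOn G A u := by
  have : ((A \ T).filter fun w => G.Adj u w) = A.filter fun w => G.Adj u w := by
    ext w
    simp only [mem_filter, mem_sdiff]
    exact ⟨fun h => ⟨h.1.1, h.2⟩,
      fun h => ⟨⟨h.1, fun hw => Finset.disjoint_left.1 hT hw (mem_filter.2 h)⟩, h.2⟩⟩
  rw [degOn, this, degOn]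

/-- `N(v) ∩ N[u]` injects into `N(u)`, with `u` taking the place of `v` when they are adjacent. -/
lemma degOn_sub_degOn_le_card_sdiff (hv : v ∈ A) (u : V) :
    degOn G A v - degOn G A u ≤
      #((A.filter fun w => G.Adj v w) \ insert u (A.filter fun w => G.Adj u w)) := by
  set Nv := A.filter fun w => G.Adj v w
  set Nu := A.filter fun w => G.Adj u w
  have hinter : #(Nv ∩ insert u Nu) ≤ #Nu := by
    by_cases hadj : G.Adj v u
    · have hvNu : v ∈ Nu := mem_filter.2 ⟨hv, hadj.symm⟩
      calc #(Nv ∩ insert u Nu) ≤ #(insert u (Nu.erase v)) := card_le_card fun w hw => by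
            simp only [Nv, mem_inter, mem_insert, mem_erase, mem_filter] at hw ⊢
            rcases hw with ⟨⟨-, hvw⟩, rfl | hw⟩
            · exact Or.inl rfl
            · exact Or.inr ⟨hvw.ne', hw⟩
        _ ≤ #(Nu.erase v) + 1 := card_insert_le _ _
        _ = #Nu := card_erase_add_one hvNu
    · refine card_le_card fun w hw => ?_
      simp only [Nv, mem_inter, mem_insert, mem_filter] at hw
      rcases hw with ⟨⟨-, hvw⟩, rfl | hw⟩
      · exact absurd hvw hadj
      · exact hw
  have := card_sdiff_add_card_inter Nv (insert u Nu)
  show #Nv - #Nu ≤ _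
  omega

lemma equates_two_of_ne (hu : u ∈ A) (hv : v ∈ A) (huv : u ≠ v)
    (hmax : ∀ w ∈ A, degOn G A w ≤ degOn G A u) (hvu : degOn G A v = degOn G A u) :
    equates G 2 A := by
  refine Or.inr ?_
  rw [← card_pair huv, maxDegOn_eq_degOn G hu hmax]
  refine card_le_card fun w hw => ?_
  rcases mem_insert.1 hw with rfl | hw
  · exact mem_filter.2 ⟨hu, rfl⟩
  · rw [mem_singleton.1 hw]
    exact mem_filter.2 ⟨hv, hvu⟩

lemma fkOn_le_card (hS : S ⊆ A) (h : equates G k (A \ S)) : fkOn G k A ≤ #S :=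
  Nat.sInf_le ⟨S, hS, rfl, by convert h⟩

lemma fkOn_eq_zero (h : equates G k A) : fkOn G k A = 0 :=
  Nat.le_zero.1 ((fkOn_le_card G (empty_subset A) (by simpa using h)).trans_eq card_empty)

lemma exists_card_eq_fkOn (hk : 0 < k) (A : Finset V) :
    ∃ S ⊆ A, #S = fkOn G k A ∧ equates G k (A \ S) := by
  refine (Nat.sInf_mem ?_ : fkOn G k A ∈ _).imp fun S ⟨hSA, hS, hSeq⟩ =>
    ⟨hSA, hS, by convert hSeq⟩
  exact ⟨#A, A, Subset.refl A, rfl, Or.inl (by convert (show #(A \ A) < k by simpa using hk))⟩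

lemma fkOn_le_one_add_fkOn_erase (hk : 0 < k) (hv : v ∈ A) :
    fkOn G k A ≤ 1 + fkOn G k (A.erase v) := by
  obtain ⟨S, hSA, hS, hSeq⟩ := exists_card_eq_fkOn G hk (A.erase v)
  have hvS : v ∉ S := fun h => notMem_erase v A (hSA h)
  have hset : A \ insert v S = A.erase v \ S := by
    ext w; simp only [mem_sdiff, mem_insert, mem_erase]; tauto
  have := fkOn_le_card G (insert_subset hv (hSA.trans (erase_subset v A)))
    (hset ▸ hSeq)
  rw [card_insert_of_notMem hvS, hS] at this
  omega

lemma one_add_fkOn_erase_le_card (hSA : S ⊆ A) (hvS : v ∈ S) (h : equates G k (A \ S)) :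
    1 + fkOn G k (A.erase v) ≤ #S := by
  have hset : A.erase v \ S.erase v = A \ S := by
    ext w; simp only [mem_sdiff, mem_erase]; by_cases w = v <;> simp_all
  have := fkOn_le_card G (erase_subset_erase v hSA) (hset ▸ h)
  rw [card_erase_of_mem hvS] at this
  have := card_pos.2 ⟨v, hvS⟩
  omega

lemma diffOn_eq (hv : v ∈ A) (hvmax : degOn G A v = maxDegOn G A) :
    diffOn G A = degOn G A v - (A.erase v).sup (degOn G A) := by
  have hval : A.val = v ::ₘ (A.erase v).val := by
    conv_lhs => rw [← insert_erase hv]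
    rw [insert_val_of_notMem (notMem_erase v A)]
  rw [diffOn, hval, Multiset.map_cons, ← hvmax, Multiset.erase_cons_head, ← sup_def]

lemma diffOn_eq_zero (hv : v ∈ A) (hvmax : degOn G A v = maxDegOn G A) (hw : w ∈ A)
    (hwv : w ≠ v) (hvw : degOn G A w = degOn G A v) : diffOn G A = 0 := by
  rw [diffOn_eq G hv hvmax, ← hvw]
  exact Nat.sub_eq_zero_of_le (le_sup (mem_erase.2 ⟨hwv, hw⟩))

/-- Deleting `d(v) - d(u)` neighbours of `v` outside the closed neighbourhood of `u` leaves `u`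
and `v` tied at degree `d(u)`. -/
lemma fkOn_two_le_degOn_sub (hu : u ∈ A) (hv : v ∈ A) (huv : u ≠ v)
    (hmax : ∀ w ∈ A, w ≠ v → degOn G A w ≤ degOn G A u) (hle : degOn G A u ≤ degOn G A v) :
    fkOn G 2 A ≤ degOn G A v - degOn G A u := by
  obtain ⟨T, hT, hTcard⟩ := exists_subset_card_eq (degOn_sub_degOn_le_card_sdiff G hv u)
  have hTv : T ⊆ A.filter fun w => G.Adj v w := hT.trans sdiff_subset
  have hTu : Disjoint T (A.filter fun w => G.Adj u w) :=
    Finset.disjoint_left.2 fun w hw hwu => (mem_sdiff.1 (hT hw)).2 (mem_insert_of_mem hwu)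
  have hTA : T ⊆ A := hTv.trans (filter_subset _ _)
  have hvT : v ∉ T := fun h => G.irrefl (mem_filter.1 (hTv h)).2
  have huT : u ∉ T := fun h => (mem_sdiff.1 (hT h)).2 (mem_insert_self u _)
  have hdegu := degOn_sdiff_of_disjoint G hTu
  have hdegv : degOn G (A \ T) v = degOn G A u := by
    rw [degOn_sdiff_of_subset G hTv, hTcard]
    omega
  rw [← hTcard]
  refine fkOn_le_card G hTA (equates_two_of_ne G (mem_sdiff.2 ⟨hu, huT⟩)
    (mem_sdiff.2 ⟨hv, hvT⟩) huv (fun w hw => ?_) (hdegv.trans hdegu.symm))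
  rw [hdegu]
  by_cases hwv : w = v
  · rw [hwv, hdegv]
  · exact (degOn_mono G sdiff_subset w).trans (hmax w (mem_sdiff.1 hw).1 hwv)

theorem fkOn_two_le_diffOn (hA : 2 ≤ #A) : fkOn G 2 A ≤ diffOn G A := by
  obtain ⟨v, hv, hmax⟩ := exists_max_image A (degOn G A) (card_pos.1 (by omega))
  have hA' : (A.erase v).Nonempty := card_pos.1 (by rw [card_erase_of_mem hv]; omega)
  obtain ⟨u, hu, hud⟩ := exists_mem_eq_sup (A.erase v) hA' (degOn G A)
  rw [diffOn_eq G hv (maxDegOn_eq_degOn G hv hmax).symm, hud]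
  exact fkOn_two_le_degOn_sub G (mem_of_mem_erase hu) hv (ne_of_mem_erase hu)
    (fun w hw hwv => hud ▸ le_sup (mem_erase.2 ⟨hwv, hw⟩)) (hmax u (mem_of_mem_erase hu))

lemma diffOn_le_card_of_equates (hv : v ∈ A) (hvmax : degOn G A v = maxDegOn G A)
    (hvS : v ∉ S) (hSA : S ⊆ A) (h : equates G 2 (A \ S)) : diffOn G A ≤ #S := by
  rw [diffOn_eq G hv hvmax]
  rcases h with hsmall | htie
  · have := degOn_le_card_erase G (A := A) v
    rw [card_sdiff_of_subset hSA] at hsmall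
    rw [card_erase_of_mem hv] at this
    omega
  · obtain ⟨u, hu, huv⟩ := (one_lt_card_iff_nontrivial.1 htie).exists_ne v
    rw [mem_filter] at hu
    have hvH : v ∈ A \ S := mem_sdiff.2 ⟨hv, hvS⟩
    calc degOn G A v - (A.erase v).sup (degOn G A)
        ≤ degOn G (A \ S) v + #S - degOn G (A \ S) u :=
          tsub_le_tsub (degOn_le_degOn_sdiff_add_card G v) <|
            (degOn_mono G sdiff_subset u).trans
              (le_sup (mem_erase.2 ⟨huv, (mem_sdiff.1 hu.1).1⟩))
      _ ≤ #S := by have := degOn_le_maxDegOn G hvH; omega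

end SimpleGraph

/-- If `G` has `n ≥ 2` vertices and `f(G) ≠ diff(G)`, then `G` has a
unique vertex `v` of maximum degree and `f(G) = 1 + f(G - v)`. -/
theorem stmt2 {V : Type*} [Fintype V] [DecidableEq V] (G : SimpleGraph V)
    (hn : 2 ≤ Fintype.card V)
    (hne : fk G 2 ≠ diffDeg G) :
    ∃ v : V, (∀ w, degOn G Finset.univ w ≤ degOn G Finset.univ v) ∧
      (∀ w, degOn G Finset.univ w = degOn G Finset.univ v → w = v) ∧
      fk G 2 = 1 + fkOn G 2 (Finset.univ.erase v) := by
  rw [← card_univ] at hn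
  have hfk : fk G 2 ≤ diffDeg G := G.fkOn_two_le_diffOn hn
  obtain ⟨v, -, hv⟩ := exists_max_image univ (degOn G univ) (card_pos.1 (by omega))
  have hvmax := (G.maxDegOn_eq_degOn (mem_univ v) hv).symm
  refine ⟨v, fun w => hv w (mem_univ w), fun w hwv => ?_, ?_⟩
  · by_contra hw
    have htie := G.equates_two_of_ne (mem_univ v) (mem_univ w) (Ne.symm hw) hv hwv
    exact hne ((G.fkOn_eq_zero htie).trans
      (G.diffOn_eq_zero (mem_univ v) hvmax (mem_univ w) hw hwv).symm)
  · obtain ⟨S, hSA, hS, hSeq⟩ := G.exists_card_eq_fkOn two_pos (univ : Finset V)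
    have hvS : v ∈ S := by
      by_contra hvS
      exact hne (hfk.antisymm
        ((G.diffOn_le_card_of_equates (mem_univ v) hvmax hvS hSA hSeq).trans_eq hS))
    exact (G.fkOn_le_one_add_fkOn_erase two_pos (mem_univ v)).antisymm
      ((G.one_add_fkOn_erase_le_card hSA hvS hSeq).trans_eq hS)
end

section
/- For every integer t ≥ 1 and every integer n with C(t+1,2) + 3 ≤ n ≤ C(t+2,2) + 2 (where C(m,2) = m(m−1)/2), there exists a finite simple graph G on exactly n vertices with f(G) = t. -/
open Finset

variable {V : Type*}

/-! Take a spine `0, …, t-1` in which two spine vertices are adjacent unless they are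
consecutive, and join each spine vertex `a` to the first `outerDeg t a` of the leaves
`t, t+1, …`. Deleting the spine leaves an edgeless graph, so `f(G) ≤ t`. If a set `S` of fewer
than `t` vertices is deleted, let `a` be the first surviving spine vertex. Every other survivor
`w` lies above `a`, and `outerDeg t` drops so fast along the spine that `w` has fewer neighbours
above `a` than `a` has after losing the at most `|S| - a` deleted ones; so `a` is the unique
vertex of maximum degree. Since `outerDeg t 0 = C(t,2) + 3`, the graph needs
`C(t+1,2) + 3` vertices. -/

section Transfer

variable {W : Type*} (H : SimpleGraph W) (f : V ↪ W) (A : Finset V)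

theorem degOn_comap (v : V) : degOn (H.comap f) A v = degOn H (A.map f) (f v) := by
  classical
  simp only [degOn, filter_map, card_map, SimpleGraph.comap_adj]
  rfl

theorem maxDegOn_comap : maxDegOn (H.comap f) A = maxDegOn H (A.map f) := by
  simp only [maxDegOn, sup_map]
  exact congrArg A.sup (funext (degOn_comap H f A))

theorem equates_comap (k : ℕ) : equates (H.comap f) k A ↔ equates H k (A.map f) := by
  classical
  simp only [equates, card_map, filter_map, maxDegOn_comap, degOn_comap]
  rfl

end Transfer

theorem equates_of_forall_degOn_eq {G : SimpleGraph V} {k d : ℕ} {A : Finset V}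
    (h : ∀ v ∈ A, degOn G A v = d) : equates G k A := by
  have hmax : ∀ v ∈ A, degOn G A v = maxDegOn G A := by
    intro v hv
    refine le_antisymm (le_sup hv) (Finset.sup_le fun w hw => ?_)
    rw [h w hw, h v hv]
  rw [equates, filter_true_of_mem hmax]
  exact lt_or_ge _ _

theorem not_equates_of_forall_degOn_lt {G : SimpleGraph V} {k : ℕ} {A : Finset V} {x : V}
    (hx : x ∈ A) (hk : 2 ≤ k) (hkA : k ≤ A.card)
    (hlt : ∀ w ∈ A, w ≠ x → degOn G A w < degOn G A x) : ¬ equates G k A := by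
  classical
  have hmax : maxDegOn G A = degOn G A x :=
    le_antisymm (Finset.sup_le fun w hw => by
      rcases eq_or_ne w x with rfl | hwx
      exacts [le_rfl, (hlt w hw hwx).le]) (le_sup hx)
  have hsub : (A.filter fun v => degOn G A v = maxDegOn G A) ⊆ {x} := by
    intro w hw
    rw [mem_filter, hmax] at hw
    by_contra hwx
    exact (hlt w hw.1 (by simpa using hwx)).ne hw.2
  have := card_le_card hsub
  rw [card_singleton] at this
  rintro (h | h) <;> omega

theorem fkOn_eq_card [DecidableEq V] {G : SimpleGraph V} {k : ℕ} {A S : Finset V} (hSA : S ⊆ A)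
    (hS : equates G k (A \ S)) (hmin : ∀ T ⊆ A, T.card < S.card → ¬ equates G k (A \ T)) :
    fkOn G k A = S.card := by
  obtain rfl : ‹DecidableEq V› = fun a b => Classical.propDecidable (a = b) :=
    Subsingleton.elim _ _
  refine le_antisymm (Nat.sInf_le ⟨S, hSA, rfl, hS⟩)
    (le_csInf ⟨_, S, hSA, rfl, hS⟩ ?_)
  rintro m ⟨T, hTA, rfl, hT⟩
  by_contra hlt
  exact hmin T hTA (not_le.mp hlt) hT

def outerDeg (t a : ℕ) : ℕ := (t - a).choose 2 + 2 + if a = 0 ∨ a + 1 < t then 1 else 0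

def spineGraph (t : ℕ) : SimpleGraph ℕ where
  Adj u v := (u < t ∧ v < t ∧ (u + 2 ≤ v ∨ v + 2 ≤ u)) ∨
    (u < t ∧ t ≤ v ∧ v < t + outerDeg t u) ∨ (v < t ∧ t ≤ u ∧ u < t + outerDeg t v)
  symm := ⟨fun _ _ => by omega⟩
  loopless := ⟨fun _ => by omega⟩

section Spine

variable {t a w s : ℕ}

theorem outerDeg_zero (t : ℕ) : outerDeg t 0 = t.choose 2 + 3 := by
  simp [outerDeg]

theorem outerDeg_le_outerDeg_zero (t a : ℕ) : outerDeg t a ≤ outerDeg t 0 := by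
  have := Nat.choose_le_choose 2 (Nat.sub_le t a)
  rw [outerDeg_zero, outerDeg]
  split_ifs <;> omega

theorem choose_two_sub_eq (ha : a < t) :
    (t - a).choose 2 = (t - (a + 1)).choose 2 + (t - (a + 1)) := by
  have : t - a = t - (a + 1) + 1 := by omega
  rw [this, Nat.choose_succ_succ', Nat.choose_one_right, add_comm]

-- Left: a bound on the degree of a spine vertex `w > a` above `a`, plus the deletions above `a`;
-- right: the number of neighbours of `a` above `a` (see `le_degOn_spineGraph_add`).
theorem spine_gap (haw : a < w) (hwt : w < t) (has : a ≤ s) (hst : s < t) :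
    (w - 1 - a) + (t - (w + 2)) + outerDeg t w + (s - a) < (t - (a + 2)) + outerDeg t a := by
  have hrec := choose_two_sub_eq (haw.trans hwt)
  have hmono : (t - w).choose 2 ≤ (t - (a + 1)).choose 2 := Nat.choose_le_choose 2 (by omega)
  unfold outerDeg
  rw [if_pos (by omega : a = 0 ∨ a + 1 < t)]
  split_ifs with hw
  · omega
  · have hlast : (t - w).choose 2 = 0 := by rw [show t - w = 1 by omega]; rfl
    omega

theorem leaf_gap (has : a ≤ s) (hst : s < t) :
    (t - a) + (s - a) < (t - (a + 2)) + outerDeg t a := by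
  have := choose_two_sub_eq (has.trans_lt hst)
  unfold outerDeg
  split_ifs <;> omega

end Spine

section Degrees

variable {t a w : ℕ} {B : Finset ℕ}

theorem degOn_spineGraph_le_of_lt (hB : ∀ v ∈ B, a ≤ v) (hwt : w < t) :
    degOn (spineGraph t) B w ≤ (w - 1 - a) + (t - (w + 2)) + outerDeg t w := by
  classical
  have hsub : B.filter ((spineGraph t).Adj w) ⊆
      Ico a (w - 1) ∪ Ico (w + 2) t ∪ Ico t (t + outerDeg t w) := by
    intro v hv
    rw [mem_filter] at hv
    have := hB v hv.1
    have := hv.2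
    simp only [spineGraph, mem_union, mem_Ico] at this ⊢
    omega
  have h₁ := card_union_le (Ico a (w - 1) ∪ Ico (w + 2) t) (Ico t (t + outerDeg t w))
  have h₂ := card_union_le (Ico a (w - 1)) (Ico (w + 2) t)
  simp only [Nat.card_Ico] at h₁ h₂
  exact (card_le_card hsub).trans (by omega)

theorem degOn_spineGraph_le_of_le (hB : ∀ v ∈ B, a ≤ v) (htw : t ≤ w) :
    degOn (spineGraph t) B w ≤ t - a := by
  classical
  have hsub : B.filter ((spineGraph t).Adj w) ⊆ Ico a t := by
    intro v hv
    rw [mem_filter] at hv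
    have := hB v hv.1
    have := hv.2
    simp only [spineGraph, mem_Ico] at this ⊢
    omega
  exact (card_le_card hsub).trans_eq (Nat.card_Ico a t)

theorem degOn_spineGraph_eq_zero (hB : ∀ v ∈ B, t ≤ v) (htw : t ≤ w) :
    degOn (spineGraph t) B w = 0 := by
  classical
  refine card_eq_zero.mpr (filter_false_of_mem fun v hv hadj => ?_)
  have := hB v hv
  simp only [spineGraph] at hadj
  omega

end Degrees

theorem le_degOn_spineGraph_add {t a : ℕ} {U S : Finset ℕ} (hat : a < t)
    (hU : range (t + outerDeg t a) ⊆ U) (hS : range a ⊆ S) :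
    (t - (a + 2)) + outerDeg t a ≤ degOn (spineGraph t) (U \ S) a + (S.card - a) := by
  classical
  have hsub : Ico (a + 2) t ∪ Ico t (t + outerDeg t a) ⊆
      (U \ S).filter ((spineGraph t).Adj a) ∪ (S \ range a) := by
    intro v hv
    have hvU : v ∈ U := hU (by simp only [mem_union, mem_Ico, mem_range] at hv ⊢; omega)
    simp only [mem_union, mem_Ico] at hv
    by_cases hvS : v ∈ S
    · exact mem_union_right _ (mem_sdiff.mpr ⟨hvS, by rw [mem_range]; omega⟩)
    · refine mem_union_left _ (mem_filter.mpr ⟨mem_sdiff.mpr ⟨hvU, hvS⟩, ?_⟩)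
      simp only [spineGraph]
      omega
  have hL := card_union_of_disjoint (Ico_disjoint_Ico_consecutive (a + 2) t (t + outerDeg t a))
  have hR := card_union_le ((U \ S).filter ((spineGraph t).Adj a)) (S \ range a)
  rw [card_sdiff_of_subset hS, card_range] at hR
  simp only [Nat.card_Ico] at hL
  have hdeg : degOn (spineGraph t) (U \ S) a =
      ((U \ S).filter ((spineGraph t).Adj a)).card := rfl
  have := card_le_card hsub
  omega

theorem not_equates_spineGraph {t : ℕ} {U S : Finset ℕ} (hU : range (t + outerDeg t 0) ⊆ U)
    (hS : S.card < t) : ¬ equates (spineGraph t) 2 (U \ S) := by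
  have hne : (range t \ S).Nonempty := by
    by_contra h
    rw [not_nonempty_iff_eq_empty, sdiff_eq_empty_iff_subset] at h
    simpa using (card_le_card h).trans_lt hS
  obtain ⟨a, ha, hmin⟩ := exists_min_image (range t \ S) id hne
  rw [mem_sdiff, mem_range] at ha
  have hra : range a ⊆ S := fun b hb => by
    by_contra hbS
    have := hmin b (mem_sdiff.mpr ⟨mem_range.mpr (by simp at hb; omega), hbS⟩)
    simp only [id, mem_range] at this hb
    omega
  have has : a ≤ S.card := by simpa using card_le_card hra
  have haU : range (t + outerDeg t a) ⊆ U :=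
    (range_subset_range.mpr (by have := outerDeg_le_outerDeg_zero t a; omega)).trans hU
  have hA : ∀ v ∈ U \ S, a ≤ v := fun v hv => by
    by_contra hva
    exact (mem_sdiff.mp hv).2 (hra (mem_range.mpr (not_le.mp hva)))
  have hlow := le_degOn_spineGraph_add ha.1 haU hra
  have hcard : 2 ≤ (U \ S).card := by
    have := le_card_sdiff S U
    have := card_le_card hU
    simp only [card_range, outerDeg_zero] at this
    omega
  refine not_equates_of_forall_degOn_lt (x := a)
    (mem_sdiff.mpr ⟨haU (mem_range.mpr (by omega)), ha.2⟩) le_rfl hcard fun w hw hwa => ?_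
  have haw : a < w := lt_of_le_of_ne (hA w hw) (Ne.symm hwa)
  rcases lt_or_ge w t with hwt | htw
  · have := degOn_spineGraph_le_of_lt hA hwt
    have := spine_gap haw hwt has hS
    omega
  · have := degOn_spineGraph_le_of_le hA htw
    have := leaf_gap has hS
    omega

theorem equates_spineGraph_sdiff_range (t k : ℕ) (U : Finset ℕ) :
    equates (spineGraph t) k (U \ range t) :=
  equates_of_forall_degOn_eq (d := 0) fun w hw =>
    degOn_spineGraph_eq_zero (fun v hv => by simpa using (mem_sdiff.mp hv).2)
      (by simpa using (mem_sdiff.mp hw).2)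

theorem stmt8_general (t n : ℕ)
    (hlo : Nat.choose (t + 1) 2 + 3 ≤ n) :
    ∃ G : SimpleGraph (Fin n), fk G 2 = t := by
  have hn : t + outerDeg t 0 ≤ n := by
    rw [Nat.choose_succ_succ', Nat.choose_one_right] at hlo
    rw [outerDeg_zero]
    omega
  have hU : range (t + outerDeg t 0) ⊆ (univ : Finset (Fin n)).map Fin.valEmbedding := by
    rwa [Fin.map_valEmbedding_univ, Nat.Iio_eq_range, range_subset_range]
  set S : Finset (Fin n) := univ.filter (·.val < t)
  have hS : S.map Fin.valEmbedding = range t := by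
    ext v
    simp only [S, mem_map, mem_filter, mem_univ, true_and, Fin.valEmbedding_apply, mem_range]
    exact ⟨fun ⟨i, hi, hiv⟩ => hiv ▸ hi, fun hv => ⟨⟨v, by omega⟩, hv, rfl⟩⟩
  have hSt : S.card = t := by rw [← card_map, hS, card_range]
  refine ⟨(spineGraph t).comap Fin.valEmbedding,
    (fkOn_eq_card (subset_univ S) ?_ fun T _ hT => ?_).trans hSt⟩
  · rw [equates_comap, Finset.map_sdiff, hS]
    exact equates_spineGraph_sdiff_range t 2 _
  · rw [equates_comap, Finset.map_sdiff]
    exact not_equates_spineGraph hU (by rw [card_map]; omega)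

/-- For every `t ≥ 1` and every `n` with
`C(t+1,2) + 3 ≤ n ≤ C(t+2,2) + 2`, there is a graph on exactly `n` vertices
with `f(G) = t`. -/
theorem stmt8 (t n : ℕ) (ht : 1 ≤ t)
    (hlo : Nat.choose (t + 1) 2 + 3 ≤ n) (hhi : n ≤ Nat.choose (t + 2) 2 + 2) :
    ∃ G : SimpleGraph (Fin n), fk G 2 = t :=
  stmt8_general t n hlo
end
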